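/- Let θ denote the formal differential operator on ℚ⟦z⟧ given by θf = z·(df/dz). The formal power series f(z) = Σ_{m≥0} [(6m)!·(2m)! / ((3m)!·(m!)⁵)] z^{2m} satisfies θ⁴ f = 2⁸·3 · z² · (θ+1)²(3θ+1)(3θ+5) f, i.e. f is annihilated by the Picard–Fuchs operator 𝒟 = θ⁴ − 2⁸·3· z² (θ+1)²(3θ+1)(3θ+5). Equivalently, the coefficients c_m = (6m)!(2m)!/((3m)!(m!)⁵) satisfy m⁴ c_m = 48 (2m−1)²(6m−5)(6m−1) c_{m−1} for all m ≥ 1. -/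

import Mathlib

/-- The formal operator `θ = z · d/dz` on `ℚ⟦z⟧`, acting on coefficients by
`(θ f)ₙ = n · fₙ`. -/
noncomputable def theta : PowerSeries ℚ → PowerSeries ℚ := fun f =>
  PowerSeries.mk fun n => (n : ℚ) * PowerSeries.coeff n f

/-- The operator `a·θ + b` on `ℚ⟦z⟧`. -/
noncomputable def thetaOp (a b : ℚ) : PowerSeries ℚ → PowerSeries ℚ := fun g =>
  PowerSeries.C (R := ℚ) a * theta g + PowerSeries.C (R := ℚ) b * g

/-- The coefficients `c_m = (6m)! (2m)! / ((3m)! (m!)⁵)`. -/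
noncomputable def c16 (m : ℕ) : ℚ :=
  ((Nat.factorial (6 * m) : ℚ) * (Nat.factorial (2 * m) : ℚ)) /
    ((Nat.factorial (3 * m) : ℚ) * (Nat.factorial m : ℚ) ^ 5)

lemma coeff_theta (g : PowerSeries ℚ) (n : ℕ) :
    PowerSeries.coeff n (theta g) = (n : ℚ) * PowerSeries.coeff n g := by
  simp [theta]

lemma coeff_thetaOp (a b : ℚ) (g : PowerSeries ℚ) (n : ℕ) :
    PowerSeries.coeff n (thetaOp a b g) = (a * n + b) * PowerSeries.coeff n g := by
  simp [thetaOp, coeff_theta]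
  ring

lemma c16_rec (k : ℕ) :
    ((k : ℚ) + 1) ^ 4 * c16 (k + 1) =
      48 * (2 * ((k : ℚ) + 1) - 1) ^ 2 * (6 * ((k : ℚ) + 1) - 5) * (6 * ((k : ℚ) + 1) - 1) *
        c16 k := by
  unfold c16
  have h6 : 6 * (k + 1) = 6 * k + 1 + 1 + 1 + 1 + 1 + 1 := by ring
  have h2 : 2 * (k + 1) = 2 * k + 1 + 1 := by ring
  have h3 : 3 * (k + 1) = 3 * k + 1 + 1 + 1 := by ring
  rw [h6, h2, h3]
  simp only [Nat.factorial_succ]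
  have f6 : (Nat.factorial (6 * k) : ℚ) ≠ 0 := by exact_mod_cast (Nat.factorial_pos _).ne'
  have f2 : (Nat.factorial (2 * k) : ℚ) ≠ 0 := by exact_mod_cast (Nat.factorial_pos _).ne'
  have f3 : (Nat.factorial (3 * k) : ℚ) ≠ 0 := by exact_mod_cast (Nat.factorial_pos _).ne'
  have f1 : (Nat.factorial k : ℚ) ≠ 0 := by exact_mod_cast (Nat.factorial_pos _).ne'
  have g1 : ((3 * k : ℕ) : ℚ) + 1 ≠ 0 := by positivity
  have g2 : ((3 * k + 1 : ℕ) : ℚ) + 1 ≠ 0 := by positivity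
  have g3 : ((3 * k + 1 + 1 : ℕ) : ℚ) + 1 ≠ 0 := by positivity
  have g4 : ((k : ℚ) + 1) ≠ 0 := by positivity
  push_cast
  field_simp
  ring

/-- The power series `f(z) = Σ_{m≥0} [(6m)!(2m)!/((3m)!(m!)⁵)] z^{2m}`
satisfies `θ⁴ f = 2⁸·3 · z² · (θ+1)²(3θ+1)(3θ+5) f`, i.e. `f` is annihilated by the
Picard–Fuchs operator `𝒟 = θ⁴ − 2⁸·3 z² (θ+1)²(3θ+1)(3θ+5)`.  Equivalently, the
coefficients `c_m` satisfy `m⁴ c_m = 48 (2m−1)²(6m−5)(6m−1) c_{m−1}` for all `m ≥ 1`. -/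
theorem stmt_16
    (f : PowerSeries ℚ)
    (hf : f = PowerSeries.mk fun n => if n % 2 = 0 then c16 (n / 2) else 0) :
    theta (theta (theta (theta f))) =
      ((2 : PowerSeries ℚ) ^ 8 * 3) * PowerSeries.X ^ 2 *
        (thetaOp 1 1 (thetaOp 1 1 (thetaOp 3 1 (thetaOp 3 5 f)))) ∧
    ∀ m : ℕ, 1 ≤ m →
      (m : ℚ) ^ 4 * c16 m =
        48 * (2 * (m : ℚ) - 1) ^ 2 * (6 * (m : ℚ) - 5) * (6 * (m : ℚ) - 1) *
          c16 (m - 1) := by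
  have h768 : ((2 : PowerSeries ℚ) ^ 8 * 3) = PowerSeries.C (R := ℚ) 768 := by
    rw [show (2 : PowerSeries ℚ) = PowerSeries.C (R := ℚ) 2 from (map_ofNat _ 2).symm,
        show (3 : PowerSeries ℚ) = PowerSeries.C (R := ℚ) 3 from (map_ofNat _ 3).symm,
        ← map_pow, ← map_mul]
    norm_num
  constructor
  · set g := thetaOp 1 1 (thetaOp 1 1 (thetaOp 3 1 (thetaOp 3 5 f))) with hg
    have hgc : ∀ d : ℕ, PowerSeries.coeff d g =
        ((d : ℚ) + 1) ^ 2 * (3 * d + 1) * (3 * d + 5) * PowerSeries.coeff d f := by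
      intro d
      rw [hg, coeff_thetaOp, coeff_thetaOp, coeff_thetaOp, coeff_thetaOp]
      ring
    have hfc : ∀ d : ℕ,
        PowerSeries.coeff d f = if d % 2 = 0 then c16 (d / 2) else 0 := by
      intro d; rw [hf, PowerSeries.coeff_mk]
    ext n
    rw [h768, mul_assoc, PowerSeries.coeff_C_mul]
    rw [coeff_theta, coeff_theta, coeff_theta, coeff_theta]
    match n with
    | 0 =>
      have : PowerSeries.coeff 0 (PowerSeries.X ^ 2 * g) = 0 := by
        rw [PowerSeries.coeff_mul, Finset.Nat.sum_antidiagonal_eq_sum_range_succ_mk]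
        simp [PowerSeries.coeff_X_pow]
      simp [this]
    | 1 =>
      have : PowerSeries.coeff 1 (PowerSeries.X ^ 2 * g) = 0 := by
        rw [PowerSeries.coeff_mul, Finset.Nat.sum_antidiagonal_eq_sum_range_succ_mk]
        simp [PowerSeries.coeff_X_pow]
      rw [this, hfc]
      norm_num
    | (d + 2) =>
      rw [PowerSeries.coeff_X_pow_mul g 2 d, hgc, hfc, hfc]
      rcases Nat.even_or_odd d with ⟨k, hk⟩ | ⟨k, hk⟩
      · subst hk
        have e1 : (k + k) % 2 = 0 := by omega
        have e2 : (k + k + 2) % 2 = 0 := by omega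
        have e3 : (k + k) / 2 = k := by omega
        have e4 : (k + k + 2) / 2 = k + 1 := by omega
        rw [e1, e2, e3, e4]
        simp only [if_true]
        have := c16_rec k
        push_cast
        nlinarith [this]
      · subst hk
        have e1 : (2 * k + 1) % 2 = 1 := by omega
        have e2 : (2 * k + 1 + 2) % 2 = 1 := by omega
        rw [e1, e2]
        norm_num
  · intro m hm
    obtain ⟨k, rfl⟩ : ∃ k, m = k + 1 := ⟨m - 1, by omega⟩
    have : (k + 1) - 1 = k := rfl
    rw [this]
    have := c16_rec k
    push_cast
    linarith [this]
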